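/- Let k ≥ 1, suppose every school has quota at least one, suppose the student acquaintance graph G admits a tree decomposition (T, (B_t)) of width k, and suppose that for every school s the restriction of ≻_s to I is single-peaked on this tree decomposition. Then there exists a feasible matching that is Pareto efficient, locally ERF-(k−1), and mutually-best. -/

import Mathlib

section Defs

variable {I S : Type*}

/-- Students' preference profiles: `pI i a b` means student `i` strictly prefers option `a`
to option `b`, where `none` represents being unmatched. -/
abbrev StudentPrefs (I S : Type*) := I → Option S → Option S → Prop

/-- Schools' preference profiles: `pS s a b` means school `s` strictly prefers `a` to `b`,
where `none` represents leaving a seat vacant. -/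
abbrev SchoolPrefs (I S : Type*) := S → Option I → Option I → Prop

/-- Each student's preference is a strict linear order on `S ∪ {∅}`. -/
def ValidStudentPrefs (pI : StudentPrefs I S) : Prop :=
  ∀ i, IsStrictTotalOrder (Option S) (pI i)

/-- Each school's preference is a strict linear order on `I ∪ {∅}`. -/
def ValidSchoolPrefs (pS : SchoolPrefs I S) : Prop :=
  ∀ s, IsStrictTotalOrder (Option I) (pS s)

/-- A matching `μ : I → Option S` is feasible if each school's quota is respected. -/
def Feasible (q : S → ℕ) (μ : I → Option S) : Prop :=
  ∀ s : S, {i | μ i = some s}.ncard ≤ q s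

/-- Student `i` has justified envy toward student `i'` in matching `μ`. -/
def JEnvy (pI : StudentPrefs I S) (pS : SchoolPrefs I S)
    (μ : I → Option S) (i i' : I) : Prop :=
  ∃ s : S, μ i' = some s ∧ pI i (some s) (μ i) ∧ pS s (some i) (some i')

/-- Local envy: justified envy toward a neighbor in the student acquaintance graph `G`. -/
def LocalEnvy (G : SimpleGraph I) (pI : StudentPrefs I S) (pS : SchoolPrefs I S)
    (μ : I → Option S) (i i' : I) : Prop :=
  JEnvy pI pS μ i i' ∧ G.Adj i i'

/-- Locally envy-free matching. -/
def LEF (G : SimpleGraph I) (pI : StudentPrefs I S) (pS : SchoolPrefs I S)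
    (μ : I → Option S) : Prop :=
  ∀ i i', ¬ LocalEnvy G pI pS μ i i'

/-- Fair (justified-envy-free) matching. -/
def Fair (pI : StudentPrefs I S) (pS : SchoolPrefs I S) (μ : I → Option S) : Prop :=
  ∀ i i', ¬ JEnvy pI pS μ i i'

/-- Locally envy-free up to `k` peers: every student has local envy toward at most `k` students. -/
def LocEF (G : SimpleGraph I) (pI : StudentPrefs I S) (pS : SchoolPrefs I S)
    (k : ℕ) (μ : I → Option S) : Prop :=
  ∀ i, {i' | LocalEnvy G pI pS μ i i'}.ncard ≤ k

/-- Locally envy-receiving-free up to `k` peers: for every student at most `k` students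
have local envy toward her. -/
def LocERF (G : SimpleGraph I) (pI : StudentPrefs I S) (pS : SchoolPrefs I S)
    (k : ℕ) (μ : I → Option S) : Prop :=
  ∀ i, {i' | LocalEnvy G pI pS μ i' i}.ncard ≤ k

/-- `μ'` Pareto dominates `μ`. -/
def Dominates (pI : StudentPrefs I S) (μ' μ : I → Option S) : Prop :=
  (∀ i, μ' i = μ i ∨ pI i (μ' i) (μ i)) ∧ (∃ i, pI i (μ' i) (μ i))

/-- A feasible matching is Pareto efficient if no feasible matching Pareto dominates it. -/
def ParetoEfficient (pI : StudentPrefs I S) (q : S → ℕ) (μ : I → Option S) : Prop :=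
  ∀ μ', Feasible q μ' → ¬ Dominates pI μ' μ

/-- `(i, s)` is a mutually-best pair. -/
def MBPair (pI : StudentPrefs I S) (pS : SchoolPrefs I S) (i : I) (s : S) : Prop :=
  (∀ x : Option S, x ≠ some s → pI i (some s) x) ∧
  (∀ y : Option I, y ≠ some i → pS s (some i) y)

/-- A matching is mutually-best if every mutually-best pair is matched. -/
def MutuallyBest (pI : StudentPrefs I S) (pS : SchoolPrefs I S) (μ : I → Option S) : Prop :=
  ∀ i s, MBPair pI pS i s → μ i = some s

/-- The set of the `m` most-preferred elements under a strict order `r`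
(`r j i` meaning `j` is strictly preferred to `i`). -/
def topSet (r : I → I → Prop) (m : ℕ) : Set I := {i | {j | r j i}.ncard < m}

/-- A strict linear order on `I` is single-peaked on the graph `G` if for each
`m ∈ {1, …, |I|}` the set of the `m` most-preferred elements induces a connected
subgraph of `G`. -/
def SinglePeakedOn (G : SimpleGraph I) (r : I → I → Prop) : Prop :=
  ∀ m : ℕ, 1 ≤ m → m ≤ Nat.card I → (G.induce (topSet r m)).Connected

/-- `(T, bag)` is a tree decomposition of `G`. -/
structure IsTreeDecomp {V : Type*} (G : SimpleGraph I) (T : SimpleGraph V)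
    (bag : V → Set I) : Prop where
  tree : T.IsTree
  covers : ∀ i : I, ∃ t, i ∈ bag t
  subtree : ∀ i : I, (T.induce {t | i ∈ bag t}).Connected
  edges : ∀ ⦃i i' : I⦄, G.Adj i i' → ∃ t, i ∈ bag t ∧ i' ∈ bag t

/-- `G` has treewidth at most `k`: it admits a tree decomposition of width at most `k`. -/
def TreewidthAtMost (G : SimpleGraph I) (k : ℕ) : Prop :=
  ∃ (V : Type) (T : SimpleGraph V) (bag : V → Set I),
    Finite V ∧ IsTreeDecomp G T bag ∧ ∀ t, (bag t).ncard ≤ k + 1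

/-- `G` is `k`-degenerate: there is a linear ordering of the vertices (an injection
into `ℕ`) such that every vertex has at most `k` neighbors occurring strictly later. -/
def Degenerate (G : SimpleGraph I) (k : ℕ) : Prop :=
  ∃ ord : I → ℕ, Function.Injective ord ∧
    ∀ i, {i' | G.Adj i i' ∧ ord i < ord i'}.ncard ≤ k

/-- The first index `j` in the list `L` of bags such that `i ∈ bag (L.get j)`. -/
noncomputable def firstBagIdx {V : Type*} (L : List V) (bag : V → Set I) (i : I) : ℕ :=
  sInf {j | ∃ h : j < L.length, i ∈ bag (L.get ⟨j, h⟩)}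

/-- A strict linear order on `I` is single-peaked on a tree decomposition `(T, bag)` if
there is a sequence of nodes covering all vertices, each node after the first adjacent in
`T` to an earlier one, such that vertices first covered earlier are preferred. -/
def SinglePeakedOnTD {V : Type*} (T : SimpleGraph V) (bag : V → Set I)
    (r : I → I → Prop) : Prop :=
  ∃ L : List V,
    (∀ i : I, ∃ j : ℕ, ∃ h : j < L.length, i ∈ bag (L.get ⟨j, h⟩)) ∧
    (∀ j : ℕ, ∀ h : j < L.length, 1 ≤ j →
      ∃ j' : ℕ, ∃ h' : j' < L.length, j' < j ∧ T.Adj (L.get ⟨j', h'⟩) (L.get ⟨j, h⟩)) ∧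
    (∀ i i' : I, firstBagIdx L bag i < firstBagIdx L bag i' → r i i')

/-- `(i, s)` is a blocking pair for the feasible matching `μ`. -/
def BlockingPair (pI : StudentPrefs I S) (pS : SchoolPrefs I S) (q : S → ℕ)
    (μ : I → Option S) (i : I) (s : S) : Prop :=
  μ i ≠ some s ∧ pI i (some s) (μ i) ∧
  (({i' | μ i' = some s}.ncard < q s ∧ pS s (some i) none) ∨
   ({i' | μ i' = some s}.ncard = q s ∧
     ∃ i₀, μ i₀ = some s ∧
       (∀ i₁, μ i₁ = some s → i₁ = i₀ ∨ pS s (some i₁) (some i₀)) ∧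
       pS s (some i) (some i₀)))

/-- A matching is locally stable if for every blocking pair `(i, s)`, no neighbor of `i`
is matched to `s`. -/
def LocallyStable (G : SimpleGraph I) (pI : StudentPrefs I S) (pS : SchoolPrefs I S)
    (q : S → ℕ) (μ : I → Option S) : Prop :=
  ∀ i s, BlockingPair pI pS q μ i s → ∀ i', G.Adj i i' → μ i' ≠ some s

/-- Strategyproofness of a mechanism `f` (the schools' side being fixed). -/
def Strategyproof (f : StudentPrefs I S → (I → Option S)) : Prop :=
  ∀ pI : StudentPrefs I S, ValidStudentPrefs pI → ∀ i : I,
    ∀ pI' : StudentPrefs I S, ValidStudentPrefs pI' →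
      (∀ i'' : I, i'' ≠ i → pI' i'' = pI i'') →
      f pI i = f pI' i ∨ pI i (f pI i) (f pI' i)

end Defs

/-!
The matching is a serial dictatorship: the students choose one after another, each taking her
favourite among the schools that still have a free seat. Any such matching is feasible and Pareto
efficient, and it is mutually best if the students of mutually-best pairs choose first. A student
can only be envied by students who choose after her, so everything rests on the order.

Call `j` a rival of `i` at `s` if `j` is a neighbour of `i` whom `s` prefers to `i`; only rivals
at the school `i` gets can envy her. Single-peakedness on the tree decomposition puts `i` and all
her rivals at `s` into one bag, so there are at most `k` of them. If some remaining student has at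
most `k - 1` remaining rivals at her favourite available school, she chooses next. Otherwise every
remaining student has at least `k` of them; as `G` is `k`-degenerate, two remaining students are
rivals of each other, and when they choose one right after the other, each has at most `k - 1`
envious rivals.
-/

lemma ncard_le_sub_one_of_subset_diff {α : Type*} {X A : Set α} {a : α} {k : ℕ}
    (hX : X.ncard ≤ k) (ha : a ∈ X) (hA : A ⊆ X \ {a}) (hfin : X.Finite := by toFinite_tac) :
    A.ncard ≤ k - 1 := by
  have := Set.ncard_le_ncard hA hfin.sdiff
  rw [Set.ncard_sdiff_singleton_of_mem ha] at this
  omega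

namespace SimpleGraph

variable {V : Type*} {T : SimpleGraph V}

lemma exists_isPath_of_induce_preconnected {A : Set V} (hA : (T.induce A).Preconnected)
    {u v : V} (hu : u ∈ A) (hv : v ∈ A) :
    ∃ p : T.Walk u v, p.IsPath ∧ ∀ z ∈ p.support, z ∈ A := by
  classical
  obtain ⟨w⟩ := hA ⟨u, hu⟩ ⟨v, hv⟩
  let w' := w.map (Embedding.induce A).toHom
  refine ⟨w'.bypass, w'.bypass_isPath, fun z hz => ?_⟩
  have hz' := w'.support_bypass_subset_support hz
  rw [Walk.support_map, List.mem_map] at hz'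
  obtain ⟨⟨z, hzA⟩, -, rfl⟩ := hz'
  exact hzA

lemma IsAcyclic.support_subset_of_induce_preconnected (hT : T.IsAcyclic) {A : Set V}
    (hA : (T.induce A).Preconnected) {u v : V} (hu : u ∈ A) (hv : v ∈ A) {p : T.Walk u v}
    (hp : p.IsPath) : ∀ z ∈ p.support, z ∈ A := by
  obtain ⟨q, hq, hqA⟩ := exists_isPath_of_induce_preconnected hA hu hv
  obtain rfl : p = q := congrArg Subtype.val ((hT.subsingleton_path u v).elim ⟨p, hp⟩ ⟨q, hq⟩)
  exact hqA

lemma IsAcyclic.mem_or_mem_of_adj (hT : T.IsAcyclic) {A B : Set V}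
    (hA : (T.induce A).Preconnected) (hB : (T.induce B).Preconnected) {a b r : V}
    (hab : T.Adj a b) (ha : a ∈ A) (hb : b ∈ B) (hrA : r ∈ A) (hrB : r ∈ B) :
    a ∈ B ∨ b ∈ A := by
  obtain ⟨p, hp, hpB⟩ := exists_isPath_of_induce_preconnected hB hb hrB
  by_cases hap : a ∈ p.support
  · exact Or.inl (hpB a hap)
  · exact Or.inr (hT.support_subset_of_induce_preconnected hA ha hrA (hp.cons hap (h := hab)) b
      (by simp))

/-- Helly property of subtrees. -/
theorem IsAcyclic.inter_inter_nonempty (hT : T.IsAcyclic) {A B C : Set V}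
    (hA : (T.induce A).Preconnected) (hB : (T.induce B).Preconnected)
    (hC : (T.induce C).Preconnected) (hAB : (A ∩ B).Nonempty) (hBC : (B ∩ C).Nonempty)
    (hCA : (C ∩ A).Nonempty) : (A ∩ B ∩ C).Nonempty := by
  classical
  obtain ⟨r, hrA, hrB⟩ := hAB
  obtain ⟨p, hpB, hpC⟩ := hBC
  obtain ⟨q, hqC, hqA⟩ := hCA
  by_cases hqB : q ∈ B
  · exact ⟨q, ⟨hqA, hqB⟩, hqC⟩
  obtain ⟨wqr, -, hwqr⟩ := exists_isPath_of_induce_preconnected hA hqA hrA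
  obtain ⟨wrp, -, hwrp⟩ := exists_isPath_of_induce_preconnected hB hrB hpB
  -- the path from `q` to `p` lies in `C`, and in `A ∪ B` as the bypass of `q ⇝ r ⇝ p`
  set D := (wqr.append wrp).bypass
  have hDC := hT.support_subset_of_induce_preconnected hC hqC hpC (wqr.append wrp).bypass_isPath
  have hDAB : ∀ z ∈ D.support, z ∈ A ∨ z ∈ B := fun z hz => by
    rcases (Walk.mem_support_append_iff wqr wrp).mp
      ((wqr.append wrp).support_bypass_subset_support hz) with h | h
    exacts [Or.inl (hwqr z h), Or.inr (hwrp z h)]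
  obtain ⟨d, hd, haB, hbB⟩ := D.exists_boundary_dart Bᶜ hqB (not_not.mpr hpB)
  have hb := D.dart_snd_mem_support_of_mem_darts hd
  have haA := (hDAB _ (D.dart_fst_mem_support_of_mem_darts hd)).resolve_right haB
  rcases hT.mem_or_mem_of_adj hA hB d.adj haA (not_not.mp hbB) hrA hrB with h | h
  · exact absurd h haB
  · exact ⟨_, ⟨h, not_not.mp hbB⟩, hDC _ hb⟩

end SimpleGraph

section BagSequence

variable {I V : Type*} {T : SimpleGraph V} {bag : V → Set I} {L : List V}

/-- The node sequences of `SinglePeakedOnTD`. -/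
def IsBagSequence (T : SimpleGraph V) (bag : V → Set I) (L : List V) : Prop :=
  (∀ i : I, ∃ j : ℕ, ∃ h : j < L.length, i ∈ bag (L.get ⟨j, h⟩)) ∧
    ∀ j : ℕ, ∀ h : j < L.length, 1 ≤ j →
      ∃ j' : ℕ, ∃ h' : j' < L.length, j' < j ∧ T.Adj (L.get ⟨j', h'⟩) (L.get ⟨j, h⟩)

lemma IsBagSequence.mem_bag_firstBagIdx (hL : IsBagSequence T bag L) (i : I) :
    ∃ h : firstBagIdx L bag i < L.length, i ∈ bag (L.get ⟨firstBagIdx L bag i, h⟩) :=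
  Nat.sInf_mem (hL.1 i)

lemma firstBagIdx_le {i : I} {j : ℕ} (h : j < L.length) (hi : i ∈ bag (L.get ⟨j, h⟩)) :
    firstBagIdx L bag i ≤ j :=
  Nat.sInf_le ⟨h, hi⟩

lemma IsBagSequence.preconnected_induce_take (hL : IsBagSequence T bag L) :
    ∀ m, (T.induce {t | t ∈ L.take m}).Preconnected
  | 0 => fun ⟨_, h⟩ => by simp at h
  | m + 1 => by
    rcases lt_or_ge m L.length with hm | hm
    · have hset : {t | t ∈ L.take (m + 1)} = {t | t ∈ L.take m} ∪ {L[m]} := by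
        ext t
        simp only [List.take_add_one, List.getElem?_eq_getElem hm, Option.toList_some,
          List.mem_append, List.mem_singleton, Set.mem_ofPred_eq, Set.mem_union,
          Set.mem_singleton_iff]
      rw [hset]
      rcases Nat.eq_zero_or_pos m with rfl | hpos
      · rw [List.take_zero, show {t | t ∈ ([] : List V)} = ∅ by simp, Set.empty_union]
        exact SimpleGraph.Preconnected.of_subsingleton
      obtain ⟨j, hj, hjm, hadj⟩ := hL.2 m hm hpos
      exact (SimpleGraph.connected_induce_union (t := {L[m]}) (hL.preconnected_induce_take m)
        SimpleGraph.Preconnected.of_subsingleton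
        (List.mem_take_iff_getElem.mpr ⟨j, by omega, rfl⟩) rfl hadj).preconnected
    · have := hL.preconnected_induce_take m
      rwa [List.take_of_length_le hm, ← List.take_of_length_le (by omega : L.length ≤ m + 1)]
        at this

/-- Helly for the subtrees of `x` and `y` and the subtree spanned by the nodes of `L` up to the
first bag of `y`. -/
lemma IsBagSequence.mem_bag_of_firstBagIdx_le (hL : IsBagSequence T bag L) (hT : T.IsAcyclic)
    (hsub : ∀ i, (T.induce {t | i ∈ bag t}).Connected) {x y : I} {t : V} (hx : x ∈ bag t)
    (hy : y ∈ bag t) (hle : firstBagIdx L bag x ≤ firstBagIdx L bag y)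
    (hlen : firstBagIdx L bag y < L.length) :
    x ∈ bag (L.get ⟨firstBagIdx L bag y, hlen⟩) := by
  obtain ⟨hlx, hxb⟩ := hL.mem_bag_firstBagIdx x
  obtain ⟨hly, hyb⟩ := hL.mem_bag_firstBagIdx y
  obtain ⟨w, ⟨hwx, hwL⟩, hwy⟩ := hT.inter_inter_nonempty (hsub x).preconnected
    (hL.preconnected_induce_take (firstBagIdx L bag y + 1)) (hsub y).preconnected
    ⟨_, hxb, List.mem_take_iff_getElem.mpr ⟨firstBagIdx L bag x, by omega, rfl⟩⟩
    ⟨_, List.mem_take_iff_getElem.mpr ⟨firstBagIdx L bag y, by omega, rfl⟩, hyb⟩ ⟨t, hy, hx⟩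
  obtain ⟨j, hj, rfl⟩ := List.mem_take_iff_getElem.mp hwL
  obtain rfl : j = firstBagIdx L bag y := le_antisymm (by omega) (firstBagIdx_le _ hwy)
  exact hwx

variable [Finite I] {G : SimpleGraph I} {k : ℕ}

lemma IsTreeDecomp.ncard_adj_firstBagIdx_le (htd : IsTreeDecomp G T bag)
    (hw : ∀ t, (bag t).ncard ≤ k + 1) (hL : IsBagSequence T bag L) (i : I) :
    {j | G.Adj j i ∧ firstBagIdx L bag j ≤ firstBagIdx L bag i}.ncard ≤ k := by
  obtain ⟨hlen, hi⟩ := hL.mem_bag_firstBagIdx i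
  refine ncard_le_sub_one_of_subset_diff (k := k + 1) (hw _) hi fun j ⟨hadj, hle⟩ => ?_
  obtain ⟨t, hjt, hit⟩ := htd.edges hadj
  exact ⟨hL.mem_bag_of_firstBagIdx_le htd.tree.isAcyclic htd.subtree hjt hit hle hlen, hadj.ne⟩

lemma IsTreeDecomp.ncard_adj_of_singlePeakedOnTD (htd : IsTreeDecomp G T bag)
    (hw : ∀ t, (bag t).ncard ≤ k + 1) {r : I → I → Prop} (hsp : SinglePeakedOnTD T bag r)
    (hr : ∀ a b, r a b → ¬ r b a) (i : I) : {j | G.Adj j i ∧ r j i}.ncard ≤ k := by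
  obtain ⟨L, hcov, hadj, hmono⟩ := hsp
  refine (Set.ncard_le_ncard ?_).trans (htd.ncard_adj_firstBagIdx_le hw ⟨hcov, hadj⟩ i)
  rintro j ⟨hji, hrji⟩
  refine ⟨hji, ?_⟩
  exact not_lt.mp fun hlt => hr _ _ hrji (hmono i j hlt)

lemma IsTreeDecomp.exists_ncard_adj_le (htd : IsTreeDecomp G T bag)
    (hw : ∀ t, (bag t).ncard ≤ k + 1) (hL : IsBagSequence T bag L) {W : Finset I}
    (hW : W.Nonempty) : ∃ v ∈ W, {u | u ∈ W ∧ G.Adj v u}.ncard ≤ k := by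
  obtain ⟨v, hv, hmax⟩ := W.exists_max_image (firstBagIdx L bag) hW
  refine ⟨v, hv, (Set.ncard_le_ncard ?_).trans (htd.ncard_adj_firstBagIdx_le hw hL v)⟩
  rintro u ⟨hu, hvu⟩
  exact ⟨hvu.symm, hmax u hu⟩

end BagSequence

/-- A vertex `v` of small degree has all its neighbours in `U` as `R`-successors; if none of them
is `R`-related back to `v`, then `v` has no `R`-predecessor and can be deleted. -/
theorem SimpleGraph.exists_mutual_of_degenerate {I : Type*} [Finite I] {G : SimpleGraph I}
    {k : ℕ} {R : I → I → Prop} (hR : ∀ i j, R i j → G.Adj i j) (U : Finset I)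
    (hdeg : ∀ W ⊆ U, W.Nonempty → ∃ v ∈ W, {u | u ∈ W ∧ G.Adj v u}.ncard ≤ k)
    (hcard : ∀ i ∈ U, k ≤ {j | j ∈ U ∧ R i j}.ncard) (hsucc : ∀ i ∈ U, ∃ j ∈ U, R i j)
    (hU : U.Nonempty) : ∃ i ∈ U, ∃ j ∈ U, R i j ∧ R j i := by
  classical
  induction U using Finset.strongInduction with
  | H U ih =>
  obtain ⟨v, hv, hvdeg⟩ := hdeg U subset_rfl hU
  have hsucc_eq : {j | j ∈ U ∧ R v j} = {u | u ∈ U ∧ G.Adj v u} :=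
    Set.eq_of_subset_of_ncard_le (fun j ⟨hj, hvj⟩ => ⟨hj, hR v j hvj⟩)
      (hvdeg.trans (hcard v hv))
  by_cases hmut : ∃ j ∈ U, R v j ∧ R j v
  · exact ⟨v, hv, hmut⟩
  push Not at hmut
  have hpred : ∀ j ∈ U, ¬ R j v := fun j hj hjv => by
    have : j ∈ {j | j ∈ U ∧ R v j} := hsucc_eq ▸ ⟨hj, (hR j v hjv).symm⟩
    exact hmut j hj this.2 hjv
  have herase : ∀ i ∈ U.erase v, {j | j ∈ U.erase v ∧ R i j} = {j | j ∈ U ∧ R i j} := by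
    intro i hi
    ext j
    simp only [Finset.mem_erase, Set.mem_ofPred_eq, and_assoc]
    exact ⟨fun h => h.2, fun h => ⟨fun hjv => hpred i (Finset.mem_of_mem_erase hi) (hjv ▸ h.2),
      h⟩⟩
  obtain ⟨w, hw, hvw⟩ := hsucc v hv
  obtain ⟨i, hi, j, hj, hij⟩ := ih (U.erase v) (Finset.erase_ssubset hv)
    (fun W hW => hdeg W (hW.trans (Finset.erase_subset v U)))
    (fun i hi => herase i hi ▸ hcard i (Finset.mem_of_mem_erase hi))
    (fun i hi => by
      obtain ⟨j, hj, hij⟩ := hsucc i (Finset.mem_of_mem_erase hi)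
      exact ⟨j, Finset.mem_erase.mpr ⟨fun h => hpred i (Finset.mem_of_mem_erase hi) (h ▸ hij), hj⟩,
        hij⟩)
    ⟨w, Finset.mem_erase.mpr ⟨(hR v w hvw).ne', hw⟩⟩
  exact ⟨i, Finset.mem_of_mem_erase hi, j, Finset.mem_of_mem_erase hj, hij⟩

section SerialDictatorship

variable {I S : Type*} {pI : StudentPrefs I S} {pS : SchoolPrefs I S}

lemma ValidStudentPrefs.asymm (hpI : ValidStudentPrefs pI) {i : I} {a b : Option S}
    (h : pI i a b) : ¬ pI i b a :=
  have := hpI i; _root_.asymm h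

lemma ValidSchoolPrefs.asymm (hpS : ValidSchoolPrefs pS) {s : S} {a b : Option I}
    (h : pS s a b) : ¬ pS s b a :=
  have := hpS s; _root_.asymm h

/-- `cap s` is the number of seats still free at `s`. -/
def Available (cap : S → ℕ) (o : Option S) : Prop :=
  ∀ s, o = some s → 0 < cap s

lemma available_none (cap : S → ℕ) : Available cap none := fun _ h => nomatch h

lemma Available.mono {cap cap' : S → ℕ} (h : ∀ s, cap' s ≤ cap s) {o : Option S}
    (ho : Available cap' o) : Available cap o :=
  fun s hs => (ho s hs).trans_le (h s)

def IsTopChoice (pI : StudentPrefs I S) (cap : S → ℕ) (i : I) (o : Option S) : Prop :=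
  Available cap o ∧ ∀ z, Available cap z → ¬ pI i z o

noncomputable def topChoice (pI : StudentPrefs I S) (cap : S → ℕ) (i : I) : Option S :=
  Classical.epsilon (IsTopChoice pI cap i)

section TopChoice

variable [Finite S] {cap : S → ℕ} {i : I}

lemma isTopChoice_topChoice (hpI : ValidStudentPrefs pI) (cap : S → ℕ) (i : I) :
    IsTopChoice pI cap i (topChoice pI cap i) := by
  have := hpI i
  exact Classical.epsilon_spec ((Finite.wellFounded_of_trans_of_irrefl (pI i)).has_min
    {o | Available cap o} ⟨none, available_none cap⟩)

lemma IsTopChoice.topChoice_eq (hpI : ValidStudentPrefs pI) {o : Option S}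
    (h : IsTopChoice pI cap i o) : topChoice pI cap i = o := by
  have ht := isTopChoice_topChoice hpI cap i
  have := hpI i
  rcases trichotomous_of (pI i) (topChoice pI cap i) o with hlt | heq | hgt
  exacts [absurd hlt (h.2 _ ht.1), heq, absurd hgt (ht.2 _ h.1)]

lemma topChoice_eq_of_mbPair (hpI : ValidStudentPrefs pI) {s : S} (h : MBPair pI pS i s)
    (hs : 0 < cap s) : topChoice pI cap i = some s := by
  refine IsTopChoice.topChoice_eq hpI ⟨fun s' hs' => Option.some_inj.mp hs' ▸ hs, fun z _ hz => ?_⟩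
  by_cases hzs : z = some s
  · exact (hpI i).irrefl _ (hzs ▸ hz)
  · exact hpI.asymm hz (h.1 z hzs)

end TopChoice

variable [DecidableEq S]

def consume (cap : S → ℕ) (o : Option S) (s : S) : ℕ :=
  if o = some s then cap s - 1 else cap s

lemma consume_le (cap : S → ℕ) (o : Option S) (s : S) : consume cap o s ≤ cap s := by
  unfold consume; split_ifs <;> omega

lemma consume_of_eq {cap : S → ℕ} {o : Option S} {s : S} (h : o = some s) :
    consume cap o s = cap s - 1 :=
  if_pos h

lemma consume_of_ne {cap : S → ℕ} {o : Option S} {s : S} (h : o ≠ some s) :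
    consume cap o s = cap s :=
  if_neg h

lemma topChoice_consume_of_ne [Finite S] (hpI : ValidStudentPrefs pI) {cap : S → ℕ} {i : I}
    {o : Option S} {s : S} (hs : topChoice pI cap i = some s) (ho : o ≠ some s) :
    topChoice pI (consume cap o) i = some s := by
  have ht := isTopChoice_topChoice hpI cap i
  rw [hs] at ht
  refine IsTopChoice.topChoice_eq hpI
    ⟨fun s' hs' => ?_, fun z hz => ht.2 z (hz.mono (consume_le cap o))⟩
  cases hs'
  rw [consume_of_ne ho]
  exact ht.1 s rfl

variable [DecidableEq I]

noncomputable def serialDictatorship (pI : StudentPrefs I S) : List I → (S → ℕ) → I → Option S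
  | [], _ => fun _ => none
  | i :: l, cap => Function.update (serialDictatorship pI l (consume cap (topChoice pI cap i))) i
      (topChoice pI cap i)

variable {cap : S → ℕ} {i j : I} {l : List I}

lemma serialDictatorship_cons_self : serialDictatorship pI (i :: l) cap i = topChoice pI cap i :=
  Function.update_self ..

lemma serialDictatorship_cons_of_ne (h : j ≠ i) :
    serialDictatorship pI (i :: l) cap j =
      serialDictatorship pI l (consume cap (topChoice pI cap i)) j :=
  Function.update_of_ne h ..

variable [Finite S]

lemma available_serialDictatorship (hpI : ValidStudentPrefs pI) :
    ∀ (l : List I) (cap : S → ℕ) (i : I), Available cap (serialDictatorship pI l cap i)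
  | [], cap, _ => available_none cap
  | j :: l, cap, i => by
    by_cases h : i = j
    · subst h
      rw [serialDictatorship_cons_self]
      exact (isTopChoice_topChoice hpI cap i).1
    · rw [serialDictatorship_cons_of_ne h]
      exact (available_serialDictatorship hpI l _ i).mono (consume_le cap _)

variable [Finite I]

theorem feasible_serialDictatorship (hpI : ValidStudentPrefs pI) (l : List I) (cap : S → ℕ) :
    Feasible cap (serialDictatorship pI l cap) := by
  induction l generalizing cap with
  | nil => intro s; simp [serialDictatorship]
  | cons i l ih =>
    intro s
    have hsub : {j | serialDictatorship pI (i :: l) cap j = some s} ⊆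
        insert i {j | serialDictatorship pI l (consume cap (topChoice pI cap i)) j = some s} :=
      fun j (hj : serialDictatorship pI (i :: l) cap j = some s) => by
        by_cases h : j = i
        · exact Or.inl h
        · exact Or.inr (by rwa [serialDictatorship_cons_of_ne h] at hj)
    have htail := ih (consume cap (topChoice pI cap i)) s
    by_cases ho : topChoice pI cap i = some s
    · have hpos : 0 < cap s := (isTopChoice_topChoice hpI cap i).1 s ho
      have := (Set.ncard_le_ncard hsub).trans (Set.ncard_insert_le _ _)
      rw [consume_of_eq ho] at htail
      omega
    · rw [consume_of_ne ho] at htail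
      refine (Set.ncard_le_ncard fun j hj => (hsub hj).resolve_left ?_).trans htail
      rintro rfl
      exact ho (by rwa [Set.mem_ofPred_eq, serialDictatorship_cons_self] at hj)

/-- The first student of `l` who is better off under `μ'` wants a school that was already full
when she chose, and `μ'` gives that school to her as well. -/
theorem exists_lt_ncard_of_dominates (hpI : ValidStudentPrefs pI) {μ' : I → Option S}
    (hl : l.Nodup)
    (hweak : ∀ i ∈ l, μ' i = serialDictatorship pI l cap i ∨
      pI i (μ' i) (serialDictatorship pI l cap i))
    (hstrict : ∃ i ∈ l, pI i (μ' i) (serialDictatorship pI l cap i)) :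
    ∃ s, cap s < {i | i ∈ l ∧ μ' i = some s}.ncard := by
  induction l generalizing cap with
  | nil => simp at hstrict
  | cons i l ih =>
    obtain ⟨hil, hl⟩ := List.nodup_cons.mp hl
    have hagree : ∀ j ∈ l, serialDictatorship pI (i :: l) cap j =
        serialDictatorship pI l (consume cap (topChoice pI cap i)) j := fun j hj =>
      serialDictatorship_cons_of_ne (ne_of_mem_of_not_mem hj hil)
    by_cases hpref : pI i (μ' i) (topChoice pI cap i)
    · obtain ⟨s, hs, hcap⟩ : ∃ s, μ' i = some s ∧ ¬ 0 < cap s := by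
        by_contra! h
        exact (isTopChoice_topChoice hpI cap i).2 _ h hpref
      exact ⟨s, lt_of_eq_of_lt (by omega)
        ((Set.ncard_pos (Set.toFinite _)).mpr ⟨i, List.mem_cons_self, hs⟩)⟩
    have hi : μ' i = topChoice pI cap i := by
      simpa [serialDictatorship_cons_self, hpref] using hweak i List.mem_cons_self
    obtain ⟨s, hs⟩ := ih hl (cap := consume cap (topChoice pI cap i))
      (fun j hj => by rw [← hagree j hj]; exact hweak j (List.mem_cons_of_mem _ hj)) (by
        obtain ⟨j, hj, hpj⟩ := hstrict
        rcases List.mem_cons.mp hj with rfl | hj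
        · rw [serialDictatorship_cons_self] at hpj
          exact absurd hpj hpref
        · exact ⟨j, hj, by rw [← hagree j hj]; exact hpj⟩)
    refine ⟨s, ?_⟩
    by_cases ho : topChoice pI cap i = some s
    · have heq : {j | j ∈ i :: l ∧ μ' j = some s} = insert i {j | j ∈ l ∧ μ' j = some s} := by
        ext j
        by_cases hj : j = i
        · subst hj; simp [hi, ho]
        · simp [hj]
      rw [heq, Set.ncard_insert_of_notMem fun h => hil h.1]
      rw [consume_of_eq ho] at hs
      omega
    · rw [consume_of_ne ho] at hs
      exact hs.trans_le (Set.ncard_le_ncard fun j hj => ⟨List.mem_cons_of_mem _ hj.1, hj.2⟩)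

theorem paretoEfficient_serialDictatorship (hpI : ValidStudentPrefs pI) (hl : l.Nodup)
    (hmem : ∀ i, i ∈ l) (cap : S → ℕ) : ParetoEfficient pI cap (serialDictatorship pI l cap) := by
  rintro μ' hμ' ⟨hweak, i, hi⟩
  obtain ⟨s, hs⟩ := exists_lt_ncard_of_dominates hpI hl (fun j _ => hweak j) ⟨i, hmem i, hi⟩
  simp only [hmem, true_and] at hs
  exact (hμ' s).not_gt hs

end SerialDictatorship

section Construction

variable {I S V : Type*} {G : SimpleGraph I} {T : SimpleGraph V} {bag : V → Set I}
  {pI : StudentPrefs I S} {pS : SchoolPrefs I S} {k m : ℕ} {cap : S → ℕ} {i : I} {l : List I}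

def rivals (G : SimpleGraph I) (pS : SchoolPrefs I S) (s : S) (i : I) : Set I :=
  {j | G.Adj j i ∧ pS s (some j) (some i)}

lemma IsTreeDecomp.ncard_rivals_le [Finite I] (htd : IsTreeDecomp G T bag)
    (hw : ∀ t, (bag t).ncard ≤ k + 1) (hpS : ValidSchoolPrefs pS)
    (hsp : ∀ s : S, SinglePeakedOnTD T bag (fun i i' => pS s (some i) (some i'))) (s : S)
    (i : I) : (rivals G pS s i).ncard ≤ k :=
  htd.ncard_adj_of_singlePeakedOnTD hw (hsp s) (fun _ _ => hpS.asymm) i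

lemma exists_mutual_rivals [Finite I] (htd : IsTreeDecomp G T bag)
    (hw : ∀ t, (bag t).ncard ≤ k + 1)
    (hsp : ∀ s : S, SinglePeakedOnTD T bag (fun i i' => pS s (some i) (some i')))
    {top : I → Option S} {U : Finset I} (hU : U.Nonempty)
    (hmany : ∀ i ∈ U, ∃ s, top i = some s ∧ k - 1 < {j | j ∈ U ∧ j ∈ rivals G pS s i}.ncard) :
    ∃ i ∈ U, ∃ j ∈ U, ∃ s t, top i = some s ∧ top j = some t ∧
      j ∈ rivals G pS s i ∧ i ∈ rivals G pS t j := by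
  obtain ⟨i₀, hi₀⟩ := hU
  obtain ⟨s₀, -⟩ := hmany i₀ hi₀
  obtain ⟨L, hcov, hadj, -⟩ := hsp s₀
  let R i j := ∃ s, top i = some s ∧ j ∈ rivals G pS s i
  have hR : ∀ i ∈ U, k - 1 < {j | j ∈ U ∧ R i j}.ncard := fun i hi => by
    obtain ⟨s, hs, hlt⟩ := hmany i hi
    simpa [R, hs] using hlt
  obtain ⟨i, hi, j, hj, ⟨s, hs, hji⟩, ⟨t, ht, hij⟩⟩ :=
    SimpleGraph.exists_mutual_of_degenerate (R := R) (fun i j ⟨_, _, h, _⟩ => h.symm) U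
      (fun W _ hW => htd.exists_ncard_adj_le hw ⟨hcov, hadj⟩ hW)
      (fun i hi => by have := hR i hi; omega)
      (fun i hi => by
        have := hR i hi
        obtain ⟨j, hj, hij⟩ :=
          Set.nonempty_of_ncard_ne_zero (s := {j | j ∈ U ∧ R i j}) (by omega)
        exact ⟨j, hj, hij⟩)
      ⟨i₀, hi₀⟩
  exact ⟨i, hi, j, hj, s, t, hs, ht, hji, hij⟩

lemma localEnvy_congr {μ ν : I → Option S} {a b : I} (ha : μ a = ν a) (hb : μ b = ν b) :
    LocalEnvy G pI pS μ a b ↔ LocalEnvy G pI pS ν a b := by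
  simp only [LocalEnvy, JEnvy, ha, hb]

lemma setOf_localEnvy_subset {μ : I → Option S} {s : S} (h : μ i = some s) :
    {j | LocalEnvy G pI pS μ j i} ⊆ rivals G pS s i := by
  rintro j ⟨⟨s', hs', -, hp⟩, hadj⟩
  obtain rfl : s = s' := Option.some_inj.mp (h.symm.trans hs')
  exact ⟨hadj, hp⟩

lemma not_jEnvy_of_eq_topChoice [Finite S] (hpI : ValidStudentPrefs pI) {μ : I → Option S}
    {j : I} (hi : μ i = topChoice pI cap i) (hj : Available cap (μ j)) :
    ¬ JEnvy pI pS μ i j := by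
  rintro ⟨s, hs, hpref, -⟩
  rw [hs] at hj
  rw [hi] at hpref
  exact (isTopChoice_topChoice hpI cap i).2 _ hj hpref

lemma mem_cons_iff_of_erase [DecidableEq I] {U : Finset I} (hi : i ∈ U)
    (hl : ∀ j, j ∈ l ↔ j ∈ U.erase i) (j : I) : j ∈ i :: l ↔ j ∈ U := by
  rw [List.mem_cons, hl, Finset.mem_erase]
  by_cases h : j = i <;> simp [h, hi]

variable [DecidableEq I] [DecidableEq S]

variable (G pI pS) in
structure IsLocERFOrder (m : ℕ) (cap : S → ℕ) (l : List I) : Prop where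
  nodup : l.Nodup
  locERF : ∀ j ∈ l,
    {i | i ∈ l ∧ LocalEnvy G pI pS (serialDictatorship pI l cap) i j}.ncard ≤ m
  mutuallyBest : ∀ x ∈ l, ∀ s, MBPair pI pS x s → 0 < cap s →
    serialDictatorship pI l cap x = some s

lemma IsLocERFOrder.nil : IsLocERFOrder G pI pS m cap [] :=
  ⟨List.nodup_nil, by simp, by simp⟩

variable [Finite S]

/-- The new first student envies nobody: she took her favourite among all available options. -/
lemma IsLocERFOrder.cons (hpI : ValidStudentPrefs pI) {o : Option S}
    (ho : topChoice pI cap i = o) (h : IsLocERFOrder G pI pS m (consume cap o) l) (hi : i ∉ l)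
    (hhead : {j | j ∈ l ∧ LocalEnvy G pI pS (serialDictatorship pI (i :: l) cap) j i}.ncard ≤ m)
    (hmb : ∀ x ∈ l, ∀ s, MBPair pI pS x s → 0 < cap s → 0 < consume cap o s) :
    IsLocERFOrder G pI pS m cap (i :: l) := by
  subst ho
  set μ := serialDictatorship pI (i :: l) cap
  have hagree : ∀ j ∈ l, μ j = serialDictatorship pI l (consume cap (topChoice pI cap i)) j :=
    fun j hj => serialDictatorship_cons_of_ne (ne_of_mem_of_not_mem hj hi)
  have hset : ∀ j, {x | x ∈ i :: l ∧ LocalEnvy G pI pS μ x j} =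
      {x | x ∈ l ∧ LocalEnvy G pI pS μ x j} := by
    refine fun j => Set.ext fun x => ⟨fun ⟨hx, he⟩ => ⟨?_, he⟩, fun ⟨hx, he⟩ => ⟨.tail _ hx, he⟩⟩
    rcases List.mem_cons.mp hx with rfl | hx
    · exact absurd he.1 (not_jEnvy_of_eq_topChoice hpI serialDictatorship_cons_self
        (available_serialDictatorship hpI _ cap j))
    · exact hx
  refine ⟨List.nodup_cons.mpr ⟨hi, h.nodup⟩, fun j hj => ?_, fun x hx s hxs hs => ?_⟩
  · rw [hset]
    rcases List.mem_cons.mp hj with rfl | hj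
    · exact hhead
    · refine le_of_eq_of_le (congrArg Set.ncard ?_) (h.locERF j hj)
      exact Set.ext fun x => and_congr_right fun hx => localEnvy_congr (hagree x hx) (hagree j hj)
  · rcases List.mem_cons.mp hx with rfl | hx
    · rw [serialDictatorship_cons_self]
      exact topChoice_eq_of_mbPair hpI hxs hs
    · exact (hagree x hx).trans (h.mutuallyBest x hx s hxs (hmb x hx s hxs hs))

lemma IsLocERFOrder.cons_of_mbPair (hpI : ValidStudentPrefs pI) (hpS : ValidSchoolPrefs pS)
    {s : S} (hxs : MBPair pI pS i s) (hs : 0 < cap s)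
    (h : IsLocERFOrder G pI pS m (consume cap (some s)) l) (hi : i ∉ l) :
    IsLocERFOrder G pI pS m cap (i :: l) := by
  have htop := topChoice_eq_of_mbPair hpI hxs hs
  have hne : ∀ j ∈ l, some j ≠ some i := fun j hj h => hi (Option.some_inj.mp h ▸ hj)
  refine h.cons hpI htop hi ?_ fun x hx s' hxs' hs' => ?_
  · refine (Set.ncard_le_ncard (t := ∅) ?_).trans (by simp)
    rintro j ⟨hj, he⟩
    exact hpS.asymm (setOf_localEnvy_subset (by rw [serialDictatorship_cons_self, htop]) he).2
      (hxs.2 _ (hne j hj))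
  · have hss : s ≠ s' := by
      rintro rfl
      exact hpS.asymm (hxs.2 _ (hne x hx)) (hxs'.2 _ (hne x hx).symm)
    rwa [consume_of_ne (by simpa using hss)]

lemma IsLocERFOrder.cons_of_few_rivals (hpI : ValidStudentPrefs pI)
    (hfew : ∀ s, topChoice pI cap i = some s → {j | j ∈ l ∧ j ∈ rivals G pS s i}.ncard ≤ m)
    (h : IsLocERFOrder G pI pS m (consume cap (topChoice pI cap i)) l) (hi : i ∉ l)
    (hmb : ∀ x ∈ l, ∀ s, MBPair pI pS x s → cap s = 0) :
    IsLocERFOrder G pI pS m cap (i :: l) := by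
  refine h.cons hpI rfl hi ?_ fun x hx s hxs hs => absurd (hmb x hx s hxs) hs.ne'
  rcases htop : topChoice pI cap i with _ | s
  · simp [LocalEnvy, JEnvy, serialDictatorship_cons_self, htop]
  refine (Set.ncard_le_ncard ?_ (l.finite_toSet.subset fun _ h => h.1)).trans (hfew s htop)
  rintro j ⟨hj, he⟩
  exact ⟨hj, setOf_localEnvy_subset (by rw [serialDictatorship_cons_self, htop]) he⟩

variable [Finite I]

/-- Each of the two students has at most `k` rivals, one of whom is the other student; the first
one does not envy the second, who gets her own favourite school. -/
lemma IsLocERFOrder.cons_cons_of_mutual_rivals (hpI : ValidStudentPrefs pI)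
    (hpS : ValidSchoolPrefs pS) (htd : IsTreeDecomp G T bag) (hw : ∀ t, (bag t).ncard ≤ k + 1)
    (hsp : ∀ s : S, SinglePeakedOnTD T bag (fun i i' => pS s (some i) (some i')))
    {ia ja : I} {si sa : S} (hsi : topChoice pI cap ia = some si)
    (hsa : topChoice pI cap ja = some sa) (hja_riv : ja ∈ rivals G pS si ia)
    (hia_riv : ia ∈ rivals G pS sa ja)
    (h : IsLocERFOrder G pI pS (k - 1) (consume (consume cap (some si)) (some sa)) l)
    (hia : ia ∉ l) (hja : ja ∉ l) (hmb : ∀ x ∈ ja :: l, ∀ s, MBPair pI pS x s → cap s = 0) :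
    IsLocERFOrder G pI pS (k - 1) cap (ia :: ja :: l) := by
  have hsne : some si ≠ some sa := fun h => hpS.asymm hja_riv.2 (Option.some_inj.mp h ▸ hia_riv.2)
  have hsa₁ := topChoice_consume_of_ne hpI hsa hsne
  have h₁ : IsLocERFOrder G pI pS (k - 1) (consume cap (some si)) (ja :: l) := by
    refine h.cons hpI hsa₁ hja ?_ fun x hx s hxs hs => ?_
    · refine ncard_le_sub_one_of_subset_diff (htd.ncard_rivals_le hw hpS hsp sa ja) hia_riv
        fun j ⟨hj, he⟩ =>
          ⟨setOf_localEnvy_subset (by rw [serialDictatorship_cons_self, hsa₁]) he, ?_⟩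
      rintro rfl
      exact hia hj
    · exact absurd (hmb x (.tail _ hx) s hxs) (hs.trans_le (consume_le _ _ _)).ne'
  refine h₁.cons hpI hsi (by simp [hia, hia_riv.1.ne]) ?_ fun x hx s hxs hs =>
    absurd (hmb x hx s hxs) hs.ne'
  refine ncard_le_sub_one_of_subset_diff (htd.ncard_rivals_le hw hpS hsp si ia) hja_riv
    fun j ⟨_, he⟩ => ⟨setOf_localEnvy_subset (by rw [serialDictatorship_cons_self, hsi]) he, ?_⟩
  rintro rfl
  refine not_jEnvy_of_eq_topChoice hpI (cap := cap) ?_ (available_serialDictatorship hpI _ cap ia)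
    he.1
  rw [serialDictatorship_cons_of_ne hja_riv.1.ne, serialDictatorship_cons_self, hsi, hsa₁, hsa]

theorem exists_isLocERFOrder (hpI : ValidStudentPrefs pI) (hpS : ValidSchoolPrefs pS)
    (htd : IsTreeDecomp G T bag) (hw : ∀ t, (bag t).ncard ≤ k + 1)
    (hsp : ∀ s : S, SinglePeakedOnTD T bag (fun i i' => pS s (some i) (some i')))
    (U : Finset I) (cap : S → ℕ) :
    ∃ l : List I, (∀ i, i ∈ l ↔ i ∈ U) ∧ IsLocERFOrder G pI pS (k - 1) cap l := by
  induction U using Finset.strongInduction generalizing cap with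
  | H U ih =>
  rcases U.eq_empty_or_nonempty with rfl | hU
  · exact ⟨[], by simp, .nil⟩
  by_cases hmb : ∃ x ∈ U, ∃ s, MBPair pI pS x s ∧ 0 < cap s
  · obtain ⟨x, hx, s, hxs, hs⟩ := hmb
    obtain ⟨l, hl, hord⟩ := ih _ (U.erase_ssubset hx) (consume cap (some s))
    exact ⟨x :: l, mem_cons_iff_of_erase hx hl, hord.cons_of_mbPair hpI hpS hxs hs (by simp [hl])⟩
  have hnomb : ∀ x ∈ U, ∀ s, MBPair pI pS x s → cap s = 0 := fun x hx s hxs =>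
    Nat.eq_zero_of_not_pos fun hs => hmb ⟨x, hx, s, hxs, hs⟩
  by_cases hfew : ∃ i ∈ U, ∀ s, topChoice pI cap i = some s →
      {j | j ∈ U ∧ j ∈ rivals G pS s i}.ncard ≤ k - 1
  · obtain ⟨i, hi, hfew⟩ := hfew
    obtain ⟨l, hl, hord⟩ := ih _ (U.erase_ssubset hi) (consume cap (topChoice pI cap i))
    have hlU : ∀ j ∈ l, j ∈ U := fun j hj => Finset.mem_of_mem_erase ((hl j).1 hj)
    refine ⟨i :: l, mem_cons_iff_of_erase hi hl, hord.cons_of_few_rivals hpI (fun s hs => ?_)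
      (by simp [hl]) fun x hx => hnomb x (hlU x hx)⟩
    refine (Set.ncard_le_ncard ?_).trans (hfew s hs)
    exact fun j hj => ⟨hlU j hj.1, hj.2⟩
  push Not at hfew
  obtain ⟨ia, hia, ja, hja, si, sa, hsi, hsa, hja_riv, hia_riv⟩ :=
    exists_mutual_rivals htd hw hsp hU hfew
  have hja' : ja ∈ U.erase ia := Finset.mem_erase.mpr ⟨hja_riv.1.ne, hja⟩
  obtain ⟨l, hl, hord⟩ := ih _ ((Finset.erase_ssubset hja').trans (U.erase_ssubset hia))
    (consume (consume cap (some si)) (some sa))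
  have hl' := mem_cons_iff_of_erase hja' hl
  refine ⟨ia :: ja :: l, mem_cons_iff_of_erase hia hl',
    hord.cons_cons_of_mutual_rivals hpI hpS htd hw hsp hsi hsa hja_riv hia_riv (by simp [hl])
      (by simp [hl]) fun x hx => hnomb x (Finset.mem_of_mem_erase ((hl' x).1 hx))⟩

end Construction

theorem pe_locerf_mb_on_treewidth_k_general {I S : Type*} [Fintype I] [Fintype S]
    {V : Type*} (k : ℕ)
    (G : SimpleGraph I) (T : SimpleGraph V) (bag : V → Set I)
    (htd : IsTreeDecomp G T bag) (hw : ∀ t, (bag t).ncard ≤ k + 1)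
    (pI : StudentPrefs I S) (pS : SchoolPrefs I S) (q : S → ℕ)
    (hpI : ValidStudentPrefs pI) (hpS : ValidSchoolPrefs pS)
    (hq : ∀ s, 1 ≤ q s)
    (hsp : ∀ s : S, SinglePeakedOnTD T bag (fun i i' => pS s (some i) (some i'))) :
    ∃ μ : I → Option S, Feasible q μ ∧ ParetoEfficient pI q μ ∧
      LocERF G pI pS (k - 1) μ ∧ MutuallyBest pI pS μ := by
  classical
  obtain ⟨l, hl, hord⟩ := exists_isLocERFOrder hpI hpS htd hw hsp Finset.univ q
  have hmem : ∀ i, i ∈ l := fun i => (hl i).2 (Finset.mem_univ i)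
  refine ⟨serialDictatorship pI l q, feasible_serialDictatorship hpI l q,
    paretoEfficient_serialDictatorship hpI hord.nodup hmem q, fun j => ?_,
    fun x s hxs => hord.mutuallyBest x (hmem x) s hxs (hq s)⟩
  simpa [hmem] using hord.locERF j (hmem j)

/-- if every school has quota at least one, `G` has a tree decomposition of
width at most `k` (`k ≥ 1`), and schools' preferences are single-peaked on this tree
decomposition, then a feasible matching exists that is Pareto efficient, locally
ERF-(k-1), and mutually-best. -/
theorem pe_locerf_mb_on_treewidth_k {I S : Type*} [Fintype I] [Fintype S] [Nonempty I]
    {V : Type*} [Finite V] (k : ℕ) (hk : 1 ≤ k)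
    (G : SimpleGraph I) (T : SimpleGraph V) (bag : V → Set I)
    (htd : IsTreeDecomp G T bag) (hw : ∀ t, (bag t).ncard ≤ k + 1)
    (pI : StudentPrefs I S) (pS : SchoolPrefs I S) (q : S → ℕ)
    (hpI : ValidStudentPrefs pI) (hpS : ValidSchoolPrefs pS)
    (hq : ∀ s, 1 ≤ q s)
    (hsp : ∀ s : S, SinglePeakedOnTD T bag (fun i i' => pS s (some i) (some i'))) :
    ∃ μ : I → Option S, Feasible q μ ∧ ParetoEfficient pI q μ ∧
      LocERF G pI pS (k - 1) μ ∧ MutuallyBest pI pS μ :=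
  pe_locerf_mb_on_treewidth_k_general k G T bag htd hw pI pS q hpI hpS hq hsp
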